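/- With the Lie derivative on Berezinian sections defined by L_X[η⊗P] = (−1)^{|X||η⊗P|+1}[η⊗P∘X], one has the Leibniz rule L_X(ξ·a) = L_X(ξ)·a + (−1)^{|X||ξ|} ξ·X(a) for homogeneous graded vector fields X, homogeneous Berezinian sections ξ, and homogeneous a in the graded algebra A. -/

import Mathlib

/-!
Since `X` is a twisted derivation, commuting it past left multiplication by `a` gives
`X ∘ a· = X(a)· + (−1)^{|X||a|} (a·) ∘ X`. Composing with `P` and weighting by the sign
`(−1)^{|X||ξ|+1}`, the `X(a)·` term cancels the second summand on the right, and what is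
left is `(−1)^{|X|(|ξ|+|a|)+1} P ∘ (a·) ∘ X`, already as operators, before passing to the
quotient.
-/

theorem neg_one_pow_zmod_two_val_add {R : Type*} [Ring R] (u v : ZMod 2) :
    (-1 : R) ^ (u + v).val = (-1) ^ u.val * (-1) ^ v.val := by
  rw [ZMod.val_add, ← neg_one_pow_eq_pow_mod_two, pow_add]

theorem LinearMap.comp_mulLeft_eq_of_twisted_leibniz {R A : Type*} [CommSemiring R]
    [Semiring A] [Algebra R A] (X : A →ₗ[R] A) (a : A) (s : R)
    (hX : ∀ b, X (a * b) = X a * b + s • (a * X b)) :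
    X ∘ₗ LinearMap.mulLeft R a =
      LinearMap.mulLeft R (X a) + s • (LinearMap.mulLeft R a ∘ₗ X) := by
  ext b
  exact hX b

/-- **Leibniz rule for the Lie derivative on Berezinian sections.**

`A` is a ℤ₂-graded commutative algebra (graded by `𝒜`), and Berezinian sections are
classes `ξ = [η⊗P]` of `m`-form-valued differential operators modulo a submodule `K`;
we represent such a section by its operator part `P : A →ₗ[ℝ] A` of parity `q` in the
quotient `(A →ₗ[ℝ] A) ⧸ K`.  The right `A`-action is `[P]·a = [P ∘ (a·)]` and the Lie
derivative along a homogeneous vector field `X` of parity `px` is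
`L_X [P] = (−1)^{px·|P| + 1} [P ∘ X]`.  Then for homogeneous `a ∈ 𝒜 pa`:
`L_X(ξ·a) = L_X(ξ)·a + (−1)^{px q} ξ·X(a)`, i.e. the Leibniz rule
`L_X(ξ·a) = L_X(ξ)·a + (−1)^{|X||ξ|} ξ·X(a)`. -/
theorem berezinian_lie_derivative_leibniz
    {A : Type*} [Ring A] [Algebra ℝ A]
    (𝒜 : ZMod 2 → Submodule ℝ A)
    (K : Submodule ℝ (A →ₗ[ℝ] A))
    (X : A →ₗ[ℝ] A) (px : ZMod 2)
    (hX : ∀ (i : ZMod 2) (c b : A), c ∈ 𝒜 i →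
      X (c * b) = X c * b + ((-1 : ℝ) ^ (px * i).val) • (c * X b))
    (P : A →ₗ[ℝ] A) (q : ZMod 2)
    (a : A) (pa : ZMod 2) (ha : a ∈ 𝒜 pa) :
    Submodule.Quotient.mk (p := K)
        (((-1 : ℝ) ^ ((px * (q + pa)).val + 1)) •
          ((P ∘ₗ LinearMap.mulLeft ℝ a) ∘ₗ X)) =
      Submodule.Quotient.mk (p := K)
          ((((-1 : ℝ) ^ ((px * q).val + 1)) • (P ∘ₗ X)) ∘ₗ LinearMap.mulLeft ℝ a) +
        Submodule.Quotient.mk (p := K)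
          (((-1 : ℝ) ^ (px * q).val) • (P ∘ₗ LinearMap.mulLeft ℝ (X a))) := by
  have hXa := X.comp_mulLeft_eq_of_twisted_leibniz a _ (hX pa a · ha)
  rw [← Submodule.Quotient.mk_add]
  congr 1
  rw [LinearMap.smul_comp, LinearMap.comp_assoc (LinearMap.mulLeft ℝ a) X P, hXa,
    LinearMap.comp_add, LinearMap.comp_smul, LinearMap.comp_assoc, mul_add, pow_succ,
    pow_succ, neg_one_pow_zmod_two_val_add]
  module
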